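/- arXiv:0709.2587 — 2 statements merged into one kernel-verified Lean document; each statement's English description precedes it below -/
import Mathlib

section
/- Let d ≥ 2, let L ⊆ ℝ^d be a full-rank lattice, let V ∈ (0, 2^d·det L] and set r = r_L(V). If K ∈ K_L is extremal, i.e. vol K = V and diam K = 2r, then every point x ∈ ℝ^d with dist(x, 2L) ≤ r belongs to 2L + K; equivalently, ℝ^d = (2L + K) ∪ R, where R = {x ∈ ℝ^d : ‖x − y‖ > r for all y ∈ 2L}. -/
/-
Cut `K` along the Voronoi cells of `2L` and translate the pieces back into the cell
`DV(2L)`; the result is `(K + 2L) ∩ DV(2L)`. Since the interior of `K` contains no nonzero point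
of `L`, the translates of `K` by `2L` have disjoint interiors, so the pieces do not overlap and
`(K + 2L) ∩ DV(2L)` has volume `vol K = V`. As `K = -K` and `diam K = 2r`, `K` lies in `B(r)`, and
then so does every point of `(K + 2L) ∩ DV(2L)`. This closed set therefore fills the convex body
`B(r) ∩ DV(2L)`, of the same volume `V`, up to a null set, hence contains it. Finally, a point at
distance at most `r` from `2L` is moved into `B(r) ∩ DV(2L)` by subtracting a nearest point of `2L`.
-/

open MeasureTheory Metric Set Function

section

open Pointwise

section VoronoiCell

variable {E : Type*} [NormedAddCommGroup E]

def voronoiCell (s : Set E) : Set E := {x | ∀ y ∈ s, ‖x‖ ≤ ‖x - y‖}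

lemma isClosed_voronoiCell (s : Set E) : IsClosed (voronoiCell s) := by
  simp only [voronoiCell, ofPred_forall]
  exact isClosed_biInter fun y _ =>
    isClosed_le continuous_norm (continuous_id.sub continuous_const).norm

lemma sub_mem_voronoiCell_iff {Λ : AddSubgroup E} {x a : E} (ha : a ∈ Λ) :
    x - a ∈ voronoiCell (Λ : Set E) ↔ ∀ b ∈ Λ, ‖x - a‖ ≤ ‖x - b‖ := by
  refine ⟨fun h b hb => ?_, fun h c hc => ?_⟩
  · simpa [sub_sub, add_sub_cancel] using h (b - a) (Λ.sub_mem hb ha)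
  · simpa [sub_sub] using h (a + c) (Λ.add_mem ha hc)

lemma exists_sub_mem_voronoiCell [ProperSpace E] {Λ : AddSubgroup E} (hΛ : IsClosed (Λ : Set E))
    (x : E) : ∃ a ∈ Λ, x - a ∈ voronoiCell (Λ : Set E) := by
  obtain ⟨a, ha, hdist⟩ := hΛ.exists_infDist_eq_dist ⟨0, Λ.zero_mem⟩ x
  refine ⟨a, ha, (sub_mem_voronoiCell_iff ha).2 fun b hb => ?_⟩
  simpa only [← dist_eq_norm, ← hdist] using infDist_le_dist_of_mem (x := x) hb

variable [InnerProductSpace ℝ E]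

lemma convex_voronoiCell (s : Set E) : Convex ℝ (voronoiCell s) := by
  have : ∀ y : E, {x : E | ‖x‖ ≤ ‖x - y‖} = innerSL ℝ y ⁻¹' Iic (‖y‖ ^ 2 / 2) := by
    intro y; ext x
    simp only [mem_ofPred_eq, mem_preimage, innerSL_apply_apply, mem_Iic, real_inner_comm x y]
    rw [← sq_le_sq₀ (norm_nonneg _) (norm_nonneg _), norm_sub_sq_real]
    constructor <;> intro h <;> linarith
  simp only [voronoiCell, ofPred_forall, this]
  exact convex_iInter₂ fun y _ => (convex_Iic _).linear_preimage (innerSL ℝ y).toLinearMap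

variable [FiniteDimensional ℝ E] [MeasurableSpace E] [BorelSpace E] (μ : Measure E)
  [μ.IsAddHaarMeasure]

lemma aedisjoint_vadd_voronoiCell {Λ : AddSubgroup E} {a b : E} (ha : a ∈ Λ) (hb : b ∈ Λ)
    (hab : a ≠ b) : AEDisjoint μ (a +ᵥ voronoiCell (Λ : Set E)) (b +ᵥ voronoiCell (Λ : Set E)) := by
  refine measure_mono_null (fun x ⟨hxa, hxb⟩ => ?_)
    (Measure.addHaar_affineSubspace μ (AffineSubspace.perpBisector a b) ?_)
  · rw [mem_vadd_set_iff_neg_vadd_mem, vadd_eq_add, neg_add_eq_sub] at hxa hxb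
    rw [SetLike.mem_coe, AffineSubspace.mem_perpBisector_iff_dist_eq, dist_eq_norm, dist_eq_norm]
    exact le_antisymm ((sub_mem_voronoiCell_iff ha).1 hxa b hb)
      ((sub_mem_voronoiCell_iff hb).1 hxb a ha)
  · simpa using hab

lemma isAddFundamentalDomain_voronoiCell {Λ : AddSubgroup E} (hΛ : IsClosed (Λ : Set E)) :
    IsAddFundamentalDomain Λ (voronoiCell (Λ : Set E)) μ where
  nullMeasurableSet := (isClosed_voronoiCell _).nullMeasurableSet
  ae_covers := ae_of_all _ fun x => by
    obtain ⟨a, ha, hx⟩ := exists_sub_mem_voronoiCell hΛ x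
    refine ⟨-⟨a, ha⟩, ?_⟩
    rwa [AddSubgroup.vadd_def, vadd_eq_add, AddSubgroup.coe_neg, neg_add_eq_sub]
  aedisjoint a b hab := aedisjoint_vadd_voronoiCell μ a.2 b.2 (Subtype.coe_injective.ne hab)

end VoronoiCell

section ConvexMeasure

lemma aedisjoint_of_disjoint_interior {X : Type*} [TopologicalSpace X] [MeasurableSpace X]
    (μ : Measure X) {s t : Set X} (hs : μ (frontier s) = 0)
    (ht : μ (frontier t) = 0) (h : Disjoint (interior s) (interior t)) : AEDisjoint μ s t := by
  refine measure_mono_null (fun x ⟨hxs, hxt⟩ => ?_) (measure_union_null hs ht)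
  by_cases hxs' : x ∈ interior s
  · exact Or.inr ⟨subset_closure hxt, fun hxt' => h.ne_of_mem hxs' hxt' rfl⟩
  · exact Or.inl ⟨subset_closure hxs, hxs'⟩

variable {E : Type*} [NormedAddCommGroup E] [NormedSpace ℝ E] [MeasurableSpace E]
  (μ : Measure E)

lemma Convex.subset_of_measure_sdiff_eq_zero [μ.IsOpenPosMeasure] {s t : Set E} (hs : Convex ℝ s)
    (hs' : (interior s).Nonempty) (ht : IsClosed t) (h : μ (s \ t) = 0) : s ⊆ t := by
  have hint : interior s ⊆ t := fun x hx => by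
    by_contra hxt
    exact (isOpen_interior.sdiff ht).measure_ne_zero μ ⟨x, hx, hxt⟩
      (measure_mono_null (sdiff_subset_sdiff_left interior_subset) h)
  calc s ⊆ closure s := subset_closure
    _ = closure (interior s) := (hs.closure_interior_eq_closure_of_nonempty_interior hs').symm
    _ ⊆ t := closure_minimal hint ht

variable [BorelSpace E] [FiniteDimensional ℝ E] [μ.IsAddHaarMeasure]

lemma Convex.interior_nonempty_of_measure_ne_zero {s : Set E} (hs : Convex ℝ s) (h : μ s ≠ 0) :
    (interior s).Nonempty := by
  rw [hs.interior_nonempty_iff_affineSpan_eq_top]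
  by_contra hspan
  exact h (measure_mono_null (subset_affineSpan ℝ s) (Measure.addHaar_affineSubspace μ _ hspan))

end ConvexMeasure

lemma MeasureTheory.IsAddFundamentalDomain.measure_iUnion_vadd_inter {G α : Type*} [AddGroup G]
    [AddAction G α] [MeasurableSpace α] {μ : Measure α} [MeasurableConstVAdd G α]
    [VAddInvariantMeasure G α μ] [Countable G] {s t : Set α} (hs : IsAddFundamentalDomain G s μ)
    (ht : NullMeasurableSet t μ) (hd : Pairwise (AEDisjoint μ on fun g : G => g +ᵥ t)) :
    μ (⋃ g : G, (g +ᵥ t) ∩ s) = μ t := by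
  rw [measure_iUnion₀ (hd.mono fun _ _ h => h.mono inter_subset_left inter_subset_left)
    fun g => (ht.vadd g).inter hs.nullMeasurableSet, hs.measure_eq_tsum t]

section SymmetricConvexBody

variable {E : Type*} [NormedAddCommGroup E] [NormedSpace ℝ E] {K : Set E}

lemma subset_closedBall_half_diam (hK : Bornology.IsBounded K) (hsymm : -K = K) :
    K ⊆ closedBall 0 (diam K / 2) := by
  intro x hx
  have hnx : -x ∈ K := hsymm ▸ neg_mem_neg.2 hx
  have := dist_le_diam_of_mem hK hx hnx
  rw [dist_eq_norm, sub_neg_eq_add, ← two_smul ℝ x, norm_smul, Real.norm_two] at this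
  rw [mem_closedBall, dist_zero_right]
  linarith

lemma Convex.disjoint_interior_vadd (hK : Convex ℝ K) (hsymm : -K = K) {a b : E}
    (h : (2⁻¹ : ℝ) • (a - b) ∉ interior K) : Disjoint (interior (a +ᵥ K)) (interior (b +ᵥ K)) := by
  rw [interior_vadd, interior_vadd, disjoint_left]
  intro x hxa hxb
  rw [mem_vadd_set_iff_neg_vadd_mem, vadd_eq_add, neg_add_eq_sub] at hxa hxb
  have hax : a - x ∈ interior K := by
    have hneg := (Homeomorph.neg E).preimage_interior K
    rw [Homeomorph.coe_neg] at hneg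
    rw [← hsymm, ← Set.neg_preimage, ← hneg]
    simpa using hxa
  apply h
  -- `(a - b) / 2` is the midpoint of `x - b` and `a - x`
  have := hK.interior hxb hax (by norm_num) (by norm_num) (by norm_num : (2⁻¹ : ℝ) + 2⁻¹ = 1)
  rwa [← smul_add, sub_add_sub_cancel'] at this

variable [MeasurableSpace E] [BorelSpace E] [FiniteDimensional ℝ E] (μ : Measure E)
  [μ.IsAddHaarMeasure]

theorem Convex.pairwise_aedisjoint_vadd (hK : Convex ℝ K) (hsymm : -K = K) {Λ : AddSubgroup E}
    (hpack : ∀ g ∈ Λ, g ≠ 0 → (2⁻¹ : ℝ) • g ∉ interior K) :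
    Pairwise (AEDisjoint μ on fun g : Λ => g +ᵥ K) := fun a b hab =>
  aedisjoint_of_disjoint_interior μ ((hK.vadd _).addHaar_frontier μ)
    ((hK.vadd _).addHaar_frontier μ) (hK.disjoint_interior_vadd hsymm
      (hpack _ (Λ.sub_mem a.2 b.2) (sub_ne_zero.2 (Subtype.coe_injective.ne hab))))

end SymmetricConvexBody

lemma iUnion_vadd_eq_add {E : Type*} [AddCommGroup E] (Λ : AddSubgroup E) (K : Set E) :
    ⋃ g : Λ, g +ᵥ K = K + Λ := by
  rw [add_comm, ← iUnion_add_left_image, iUnion_subtype]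
  rfl

section LatticePacking

variable {E : Type*} [NormedAddCommGroup E] [InnerProductSpace ℝ E] [FiniteDimensional ℝ E]
  [MeasurableSpace E] [BorelSpace E] (μ : Measure E) [μ.IsAddHaarMeasure]
  {Λ : AddSubgroup E} [Countable Λ] {K : Set E}

theorem closedBall_inter_voronoiCell_subset_add (hΛ : IsClosed (Λ : Set E)) (hKcpt : IsCompact K)
    (hKconv : Convex ℝ K) (hKsymm : -K = K)
    (hpack : ∀ g ∈ Λ, g ≠ 0 → (2⁻¹ : ℝ) • g ∉ interior K) {r : ℝ} (hKr : K ⊆ closedBall 0 r)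
    (hvol : μ (closedBall 0 r ∩ voronoiCell (Λ : Set E)) = μ K) (hK0 : μ K ≠ 0) :
    closedBall 0 r ∩ voronoiCell (Λ : Set E) ⊆ K + Λ := by
  set S := closedBall (0 : E) r ∩ voronoiCell (Λ : Set E)
  set U := (K + Λ) ∩ voronoiCell (Λ : Set E)
  have hUS : U ⊆ S := by
    rintro _ ⟨⟨k, hk, g, hg, rfl⟩, hcell⟩
    refine ⟨mem_closedBall_zero_iff.2 ?_, hcell⟩
    calc ‖k + g‖ ≤ ‖k + g - g‖ := hcell g hg
      _ = ‖k‖ := by rw [add_sub_cancel_right]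
      _ ≤ r := mem_closedBall_zero_iff.1 (hKr hk)
  have hUclosed : IsClosed U :=
    (hΛ.add_left_of_isCompact hKcpt).inter (isClosed_voronoiCell _)
  have hμU : μ U = μ K := by
    rw [show U = ⋃ g : Λ, (g +ᵥ K) ∩ voronoiCell (Λ : Set E) by
      rw [← iUnion_inter, iUnion_vadd_eq_add]]
    exact (isAddFundamentalDomain_voronoiCell μ hΛ).measure_iUnion_vadd_inter
      hKcpt.measurableSet.nullMeasurableSet (hKconv.pairwise_aedisjoint_vadd μ hKsymm hpack)
  have hnull : μ (S \ U) = 0 := by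
    rw [measure_sdiff hUS hUclosed.nullMeasurableSet (hμU ▸ hKcpt.measure_lt_top.ne), hvol, hμU,
      tsub_self]
  have hS : Convex ℝ S := (convex_closedBall 0 r).inter (convex_voronoiCell _)
  exact (hS.subset_of_measure_sdiff_eq_zero μ (hS.interior_nonempty_of_measure_ne_zero μ
    (hvol ▸ hK0)) hUclosed hnull).trans inter_subset_left

theorem exists_sub_mem_of_exists_norm_sub_le (hΛ : IsClosed (Λ : Set E)) (hKcpt : IsCompact K)
    (hKconv : Convex ℝ K) (hKsymm : -K = K)
    (hpack : ∀ g ∈ Λ, g ≠ 0 → (2⁻¹ : ℝ) • g ∉ interior K) {r : ℝ} (hKr : K ⊆ closedBall 0 r)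
    (hvol : μ (closedBall 0 r ∩ voronoiCell (Λ : Set E)) = μ K) (hK0 : μ K ≠ 0) {x : E}
    (hx : ∃ b ∈ Λ, ‖x - b‖ ≤ r) : ∃ a ∈ Λ, x - a ∈ K := by
  obtain ⟨b, hb, hxb⟩ := hx
  obtain ⟨a, ha, hcell⟩ := exists_sub_mem_voronoiCell hΛ x
  have hxa : x - a ∈ closedBall 0 r ∩ voronoiCell (Λ : Set E) :=
    ⟨by simpa using ((sub_mem_voronoiCell_iff ha).1 hcell b hb).trans hxb, hcell⟩
  obtain ⟨k, hk, g, hg, hkg⟩ := closedBall_inter_voronoiCell_subset_add μ hΛ hKcpt hKconv hKsymm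
    hpack hKr hvol hK0 hxa
  exact ⟨a + g, Λ.add_mem ha hg, by rwa [← sub_sub, ← hkg, add_sub_cancel_right]⟩

end LatticePacking

end

namespace Matrix

open Topology

variable {d : ℕ} (A : Matrix (Fin d) (Fin d) ℝ)

def toEuclideanLinOfPi : (Fin d → ℝ) →ₗ[ℝ] EuclideanSpace ℝ (Fin d) :=
  (WithLp.linearEquiv 2 ℝ (Fin d → ℝ)).symm.toLinearMap ∘ₗ A.mulVecLin

def latticeHom : (Fin d → ℤ) →+ EuclideanSpace ℝ (Fin d) :=
  A.toEuclideanLinOfPi.toAddMonoidHom.comp ((Int.castAddHom ℝ).compLeft (Fin d))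

def lattice : AddSubgroup (EuclideanSpace ℝ (Fin d)) := A.latticeHom.range

lemma mem_lattice {x : EuclideanSpace ℝ (Fin d)} :
    x ∈ A.lattice ↔ ∃ z : Fin d → ℤ, WithLp.toLp 2 (A *ᵥ fun i => (z i : ℝ)) = x :=
  AddMonoidHom.mem_range

instance : Countable A.lattice := (Set.countable_range A.latticeHom).to_subtype

lemma isClosed_lattice (hA : IsUnit A.det) :
    IsClosed (A.lattice : Set (EuclideanSpace ℝ (Fin d))) := by
  have hf : IsClosedEmbedding A.toEuclideanLinOfPi := by
    refine LinearMap.isClosedEmbedding_of_injective (LinearMap.ker_eq_bot.2 ?_)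
    exact (WithLp.linearEquiv 2 ℝ (Fin d → ℝ)).symm.injective.comp
      (mulVec_injective_iff_isUnit.2 ((isUnit_iff_isUnit_det A).2 hA))
  have hcast : IsClosedEmbedding (Pi.map fun _ : Fin d => ((↑) : ℤ → ℝ)) :=
    .piMap fun _ => Int.isClosedEmbedding_coe_real
  exact (hf.comp hcast).isClosed_range

lemma mem_smul_lattice {c : ℝ} {x : EuclideanSpace ℝ (Fin d)} :
    x ∈ (c • A).lattice ↔ ∃ y ∈ A.lattice, c • y = x := by
  simp only [mem_lattice, smul_mulVec, WithLp.toLp_smul]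
  constructor
  · rintro ⟨z, rfl⟩
    exact ⟨_, ⟨z, rfl⟩, rfl⟩
  · rintro ⟨_, ⟨z, rfl⟩, rfl⟩
    exact ⟨z, rfl⟩

end Matrix

theorem extremal_body_covers_complement_of_R_general
    (d : ℕ)
    (A : Matrix (Fin d) (Fin d) ℝ) (hA : IsUnit A.det)
    (L : Set (EuclideanSpace ℝ (Fin d)))
    (hL : L = {x | ∃ z : Fin d → ℤ, x = WithLp.toLp 2 (A.mulVec (fun i => (z i : ℝ)))})
    -- `DV2L` is the Dirichlet–Voronoi cell of the lattice `2L`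
    (DV2L : Set (EuclideanSpace ℝ (Fin d)))
    (hDV : DV2L = {x | ∀ y ∈ L, ‖x‖ ≤ ‖x - (2 : ℝ) • y‖})
    (V : ℝ) (hV0 : 0 < V)
    -- `r = r_L(V)`
    (r : ℝ)
    (hrV : volume (closedBall (0 : EuclideanSpace ℝ (Fin d)) r ∩ DV2L)
      = ENNReal.ofReal V)
    -- `K ∈ K_L` is extremal: `vol K = V` and `diam K = 2r`
    (K : Set (EuclideanSpace ℝ (Fin d)))
    (hKcpt : IsCompact K) (hKconv : Convex ℝ K) (hKsymm : K = -K)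
    (hKadm : ∀ y ∈ L, y ≠ 0 → y ∉ interior K)
    (hKvol : volume K = ENNReal.ofReal V)
    (hKdiam : diam K = 2 * r)
    (x : EuclideanSpace ℝ (Fin d))
    -- `x ∉ R`, i.e. `dist (x, 2L) ≤ r`
    (hx : ∃ y ∈ L, ‖x - (2 : ℝ) • y‖ ≤ r) :
    ∃ y ∈ L, x - (2 : ℝ) • y ∈ K := by
  have hLA : L = A.lattice := by
    ext y
    rw [hL, SetLike.mem_coe, Matrix.mem_lattice, mem_ofPred_eq]
    exact exists_congr fun _ => eq_comm
  set Λ := ((2 : ℝ) • A).lattice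
  have hΛ : ∀ g, g ∈ Λ ↔ ∃ y ∈ L, (2 : ℝ) • y = g := fun g => by
    rw [Matrix.mem_smul_lattice, hLA]; rfl
  have hΛclosed : IsClosed (Λ : Set (EuclideanSpace ℝ (Fin d))) := Matrix.isClosed_lattice _ <| by
    rw [Matrix.det_smul]; exact ((two_ne_zero (α := ℝ)).isUnit.pow _).mul hA
  have hDVΛ : DV2L = voronoiCell (Λ : Set (EuclideanSpace ℝ (Fin d))) := by
    ext v; simp [hDV, voronoiCell, hΛ]
  have hKr : K ⊆ closedBall 0 r := by
    simpa [hKdiam] using subset_closedBall_half_diam hKcpt.isBounded hKsymm.symm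
  have hpack : ∀ g ∈ Λ, g ≠ 0 → (2⁻¹ : ℝ) • g ∉ interior K := by
    rintro g hg hg0
    obtain ⟨y, hy, rfl⟩ := (hΛ g).1 hg
    rw [inv_smul_smul₀ two_ne_zero]
    exact hKadm y hy (by rintro rfl; simp at hg0)
  obtain ⟨y₀, hy₀, hxy₀⟩ := hx
  obtain ⟨g, hg, hxg⟩ := exists_sub_mem_of_exists_norm_sub_le volume hΛclosed hKcpt hKconv
    hKsymm.symm hpack hKr (by rw [← hDVΛ, hrV, hKvol]) (by simpa [hKvol] using hV0)
    ⟨_, (hΛ _).2 ⟨y₀, hy₀, rfl⟩, hxy₀⟩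
  obtain ⟨y, hy, rfl⟩ := (hΛ g).1 hg
  exact ⟨y, hy, hxg⟩

/-- If `K ∈ K_L` is extremal (`vol K = V`, `diam K = 2 r_L(V)`), then every point at
distance at most `r_L(V)` from `2L` belongs to `2L + K`; equivalently
`ℝ^d = (2L + K) ∪ R` with `R = {x : ‖x - y‖ > r for all y ∈ 2L}`. -/
theorem extremal_body_covers_complement_of_R
    (d : ℕ) (hd : 2 ≤ d)
    (A : Matrix (Fin d) (Fin d) ℝ) (hA : IsUnit A.det)
    (L : Set (EuclideanSpace ℝ (Fin d)))
    (hL : L = {x | ∃ z : Fin d → ℤ, x = WithLp.toLp 2 (A.mulVec (fun i => (z i : ℝ)))})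
    -- `DV2L` is the Dirichlet–Voronoi cell of the lattice `2L`
    (DV2L : Set (EuclideanSpace ℝ (Fin d)))
    (hDV : DV2L = {x | ∀ y ∈ L, ‖x‖ ≤ ‖x - (2 : ℝ) • y‖})
    -- `μ` is the covering radius (inhomogeneous minimum) of `L`
    (μ : ℝ) (hμ : μ = ⨆ x : EuclideanSpace ℝ (Fin d), infDist x L)
    (V : ℝ) (hV0 : 0 < V) (hV1 : V ≤ 2 ^ d * |A.det|)
    -- `r = r_L(V)`
    (r : ℝ) (hr0 : 0 < r) (hrμ : r ≤ 2 * μ)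
    (hrV : volume (closedBall (0 : EuclideanSpace ℝ (Fin d)) r ∩ DV2L)
      = ENNReal.ofReal V)
    -- `K ∈ K_L` is extremal: `vol K = V` and `diam K = 2r`
    (K : Set (EuclideanSpace ℝ (Fin d)))
    (hKcpt : IsCompact K) (hKconv : Convex ℝ K) (hKsymm : K = -K)
    (hKadm : ∀ y ∈ L, y ≠ 0 → y ∉ interior K)
    (hKvol : volume K = ENNReal.ofReal V)
    (hKdiam : diam K = 2 * r)
    (x : EuclideanSpace ℝ (Fin d))
    -- `x ∉ R`, i.e. `dist (x, 2L) ≤ r`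
    (hx : ∃ y ∈ L, ‖x - (2 : ℝ) • y‖ ≤ r) :
    ∃ y ∈ L, x - (2 : ℝ) • y ∈ K :=
  extremal_body_covers_complement_of_R_general d A hA L hL DV2L hDV V hV0 r hrV K hKcpt hKconv
    hKsymm hKadm hKvol hKdiam x hx
end

section
/- Let K ⊆ ℝ³ be a compact convex set with K = −K containing no nonzero integer point in its interior, and set D = diam K. If 2√2 < D ≤ 2√3, then vol K ≤ 4√(D² − 8) + (3D² − 4)·arctan((12 − D²)/(4√(D² − 8))) − (2/3)·D³·arctan(D(12 − D²)/((D² + 4)√(D² − 8))). -/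
/-!
Since `K = -K`, the diameter bound puts `K` inside the ball of radius `D / 2`. Cut the interior of
`K` along the cubes `2z + [-1, 1)³` and translate each piece back into `[-1, 1)³`. Two translated
pieces cannot overlap: if `y + 2z` and `y + 2w` both lie in the interior, then so does the midpoint
of `y + 2z` and `-(y + 2w)`, which is the integer point `z - w`. Translating a point of `[-1, 1)³`
by a vector of `2ℤ³` does not decrease its norm, so all pieces land in `B(D / 2) ∩ [-1, 1]³`. The
volume of this set is computed by integrating the areas of its slices, using explicit primitives.
-/

open MeasureTheory Metric Real Set intervalIntegral

theorem abs_le_abs_add_two_mul_intCast {a : ℝ} (ha : |a| ≤ 1) (k : ℤ) : |a| ≤ |a + 2 * k| := by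
  rcases eq_or_ne k 0 with rfl | hk
  · simp
  have hk1 : (1 : ℝ) ≤ |(k : ℝ)| := by exact_mod_cast Int.one_le_abs hk
  calc |a| ≤ |2 * (k : ℝ)| - |-a| := by rw [abs_mul, abs_two, abs_neg]; linarith
    _ ≤ |2 * (k : ℝ) - -a| := abs_sub_abs_le_abs_sub _ _
    _ = |a + 2 * k| := by ring_nf

theorem subset_closedBall_diam_div_two {E : Type*} [NormedAddCommGroup E] [NormedSpace ℝ E]
    {K : Set E} (hK : Bornology.IsBounded K) (hneg : ∀ x ∈ K, -x ∈ K) :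
    K ⊆ closedBall 0 (diam K / 2) := by
  intro x hx
  have h := dist_le_diam_of_mem hK hx (hneg x hx)
  rw [dist_eq_norm, sub_neg_eq_add, ← two_smul ℝ x, norm_smul, Real.norm_two] at h
  rw [mem_closedBall, dist_zero_right]
  linarith

theorem Convex.measure_le_measure_interior {E : Type*} [NormedAddCommGroup E] [NormedSpace ℝ E]
    [MeasurableSpace E] [BorelSpace E] [FiniteDimensional ℝ E] (μ : Measure E)
    [μ.IsAddHaarMeasure] {K : Set E} (hK : Convex ℝ K) : μ K ≤ μ (interior K) :=
  calc μ K ≤ μ (interior K ∪ frontier K) := by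
        rw [← closure_eq_interior_union_frontier]; exact measure_mono subset_closure
    _ ≤ μ (interior K) + μ (frontier K) := measure_union_le _ _
    _ = μ (interior K) := by rw [hK.addHaar_frontier μ, add_zero]

section LatticePacking

variable {ι : Type*}

def intPoint (z : ι → ℤ) : EuclideanSpace ℝ ι := WithLp.toLp 2 fun i => (z i : ℝ)

theorem intPoint_sub (z w : ι → ℤ) : intPoint (z - w) = intPoint z - intPoint w := by
  ext i; simp [intPoint]

-- `x` lies in the translate of `[-1, 1)^ι` by `2 • intPoint (cellIndex x)`.
noncomputable def cellIndex (x : EuclideanSpace ℝ ι) : ι → ℤ := fun i => ⌊(x i + 1) / 2⌋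

theorem measurable_cellIndex [Fintype ι] : Measurable (cellIndex (ι := ι)) :=
  measurable_pi_lambda _ fun i =>
    Int.measurable_floor.comp (((measurable_pi_apply i).comp
      (PiLp.continuous_ofLp 2 _).measurable).add_const 1 |>.div_const 2)

theorem cellIndex_add_two_smul_intPoint (x : EuclideanSpace ℝ ι) (z : ι → ℤ) :
    cellIndex (x + (2 : ℝ) • intPoint z) = cellIndex x + z := by
  funext i
  simp only [cellIndex, intPoint, PiLp.add_apply, PiLp.smul_apply, smul_eq_mul,
    Pi.add_apply, ← Int.floor_add_intCast]
  ring_nf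

theorem abs_le_one_of_cellIndex_eq_zero {x : EuclideanSpace ℝ ι} (hx : cellIndex x = 0) (i : ι) :
    |x i| ≤ 1 := by
  have h := congrFun hx i
  simp only [cellIndex, Pi.zero_apply, Int.floor_eq_zero_iff, mem_Ico] at h
  rw [abs_le]; constructor <;> linarith [h.1, h.2]

theorem volume_le_of_translates_injective [Fintype ι] {U S : Set (EuclideanSpace ℝ ι)}
    (hU : MeasurableSet U)
    (hinj : ∀ y z w, y + (2 : ℝ) • intPoint z ∈ U → y + (2 : ℝ) • intPoint w ∈ U → z = w)
    (hS : ∀ y z, cellIndex y = 0 → y + (2 : ℝ) • intPoint z ∈ U → y ∈ S) :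
    volume U ≤ volume S := by
  set V := fun z : ι → ℤ => (· + (2 : ℝ) • intPoint z) ⁻¹' U ∩ cellIndex ⁻¹' {0}
  have hcell (z : ι → ℤ) : MeasurableSet (cellIndex ⁻¹' {z} : Set (EuclideanSpace ℝ ι)) :=
    measurable_cellIndex (measurableSet_singleton z)
  have hfold (z : ι → ℤ) : (· + (2 : ℝ) • intPoint z) ⁻¹' (U ∩ cellIndex ⁻¹' {z}) = V z := by
    ext y; simp [V, cellIndex_add_two_smul_intPoint]
  have hVdisj : Pairwise (Function.onFun Disjoint V) := fun z w hzw =>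
    disjoint_left.2 fun y hz hw => hzw (hinj y z w hz.1 hw.1)
  have hUdisj : Pairwise (Function.onFun Disjoint fun z => U ∩ cellIndex ⁻¹' {z}) := fun z w hzw =>
    (((disjoint_singleton.2 hzw).preimage cellIndex).mono inter_subset_right inter_subset_right)
  calc volume U = volume (⋃ z, U ∩ cellIndex ⁻¹' {z}) := by
        rw [← inter_iUnion, ← preimage_iUnion, iUnion_of_singleton, preimage_univ, inter_univ]
    _ = ∑' z, volume (U ∩ cellIndex ⁻¹' {z}) := measure_iUnion hUdisj fun z => hU.inter (hcell z)
    _ = ∑' z, volume (V z) := by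
        simp_rw [← hfold, measure_preimage_add_right]
    _ = volume (⋃ z, V z) :=
        (measure_iUnion hVdisj fun z => (hU.preimage (measurable_add_const _)).inter (hcell 0)).symm
    _ ≤ volume S := measure_mono (iUnion_subset fun z y hy => hS y z hy.2 hy.1)

theorem eq_of_add_two_smul_intPoint_mem {U : Set (EuclideanSpace ℝ ι)} (hconv : Convex ℝ U)
    (hneg : ∀ x ∈ U, -x ∈ U) (hfree : ∀ z ≠ 0, intPoint z ∉ U) {y : EuclideanSpace ℝ ι}
    {z w : ι → ℤ} (hz : y + (2 : ℝ) • intPoint z ∈ U) (hw : y + (2 : ℝ) • intPoint w ∈ U) :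
    z = w := by
  by_contra hzw
  refine hfree (z - w) (sub_ne_zero.2 hzw) ?_
  convert hconv hz (hneg _ hw) (by norm_num : (0 : ℝ) ≤ 1 / 2) (by norm_num : (0 : ℝ) ≤ 1 / 2)
    (by norm_num) using 1
  rw [intPoint_sub]
  module

theorem norm_le_norm_add_two_smul_intPoint [Fintype ι] {y : EuclideanSpace ℝ ι}
    (hy : ∀ i, |y i| ≤ 1) (z : ι → ℤ) : ‖y‖ ≤ ‖y + (2 : ℝ) • intPoint z‖ := by
  rw [EuclideanSpace.norm_eq, EuclideanSpace.norm_eq]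
  gcongr with i
  simpa [intPoint] using abs_le_abs_add_two_mul_intCast (hy i) (z i)

theorem volume_le_volume_closedBall_inter_cube [Fintype ι] {K : Set (EuclideanSpace ℝ ι)}
    (hK : Bornology.IsBounded K) (hconv : Convex ℝ K) (hneg : ∀ x ∈ K, -x ∈ K)
    (hfree : ∀ z ≠ 0, intPoint z ∉ interior K) :
    volume K ≤ volume (closedBall 0 (diam K / 2) ∩ {x : EuclideanSpace ℝ ι | ∀ i, |x i| ≤ 1}) := by
  have hneg_int : ∀ x ∈ interior K, -x ∈ interior K := fun x hx =>
    interior_mono (image_subset_iff.2 hneg)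
      ((Homeomorph.neg _).isOpenMap.image_interior_subset K (mem_image_of_mem _ hx))
  refine (hconv.measure_le_measure_interior volume).trans <| volume_le_of_translates_injective
    isOpen_interior.measurableSet
    (fun y z w => eq_of_add_two_smul_intPoint_mem hconv.interior hneg_int hfree) ?_
  intro y z hy hyz
  have hy1 := abs_le_one_of_cellIndex_eq_zero hy
  refine ⟨?_, hy1⟩
  rw [mem_closedBall, dist_zero_right]
  exact (norm_le_norm_add_two_smul_intPoint hy1 z).trans <| by
    simpa using subset_closedBall_diam_div_two hK hneg (interior_subset hyz)

end LatticePacking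

theorem volume_setOf_mem_Icc_and_sq_le (c : ℝ) :
    volume {z : ℝ | z ∈ Icc (-1) 1 ∧ z ^ 2 ≤ c} = ENNReal.ofReal (2 * min 1 √c) := by
  rcases lt_or_ge c 0 with hc | hc
  · have : {z : ℝ | z ∈ Icc (-1) 1 ∧ z ^ 2 ≤ c} = ∅ :=
      eq_empty_of_forall_notMem fun z hz => by nlinarith [hz.2, sq_nonneg z]
    rw [this, measure_empty, Real.sqrt_eq_zero'.2 hc.le]
    simp
  · have : {z : ℝ | z ∈ Icc (-1) 1 ∧ z ^ 2 ≤ c} = Icc (-min 1 √c) (min 1 √c) := by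
      ext z
      simp only [mem_ofPred_eq, mem_Icc, Real.sq_le hc, neg_le (a := min _ _), le_min_iff]
      constructor <;> intro h <;> refine ⟨⟨?_, ?_⟩, ?_, ?_⟩ <;>
        linarith [h.1.1, h.1.2, h.2.1, h.2.2]
    rw [this, Real.volume_Icc]
    ring_nf

theorem volume_prod_setOf_mem_Icc {β : Type*} [MeasurableSpace β] {ν : Measure β} [SFinite ν]
    {a b : ℝ} (hab : a ≤ b) {A : ℝ → Set β}
    (hA : MeasurableSet {p : ℝ × β | p.1 ∈ Icc a b ∧ p.2 ∈ A p.1}) {f : ℝ → ℝ}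
    (hf : IntegrableOn f (Icc a b)) (hf0 : ∀ x ∈ Icc a b, 0 ≤ f x)
    (hAf : ∀ x ∈ Icc a b, ν (A x) = ENNReal.ofReal (f x)) :
    (volume.prod ν) {p : ℝ × β | p.1 ∈ Icc a b ∧ p.2 ∈ A p.1} =
      ENNReal.ofReal (∫ x in a..b, f x) := by
  rw [Measure.prod_apply hA, intervalIntegral.integral_of_le hab, ← integral_Icc_eq_integral_Ioc,
    ofReal_integral_eq_lintegral_ofReal hf (ae_restrict_of_forall_mem measurableSet_Icc hf0),
    ← lintegral_indicator measurableSet_Icc]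
  refine lintegral_congr fun x => ?_
  change ν {y | x ∈ Icc a b ∧ y ∈ A x} = _
  by_cases hx : x ∈ Icc a b
  · simp only [hx, true_and, ofPred_mem_eq, indicator_of_mem, hAf]
  · simp only [hx, false_and, ofPred_false, measure_empty, indicator_of_notMem, not_false_eq_true]

noncomputable def squareDiskArea (t : ℝ) : ℝ := ∫ y in (-1)..1, 2 * min 1 √(t - y ^ 2)

theorem continuous_squareDiskArea : Continuous squareDiskArea :=
  intervalIntegral.continuous_parametric_intervalIntegral_of_continuous' (by fun_prop) _ _

theorem squareDiskArea_nonneg (t : ℝ) : 0 ≤ squareDiskArea t :=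
  intervalIntegral.integral_nonneg (by norm_num) fun y _ => by positivity

theorem volume_squareDisk (t : ℝ) :
    volume {q : ℝ × ℝ | q.1 ∈ Icc (-1) 1 ∧ q.2 ∈ Icc (-1) 1 ∧ q.2 ^ 2 ≤ t - q.1 ^ 2} =
      ENNReal.ofReal (squareDiskArea t) := by
  have hm : MeasurableSet
      {q : ℝ × ℝ | q.1 ∈ Icc (-1) 1 ∧ q.2 ∈ Icc (-1) 1 ∧ q.2 ^ 2 ≤ t - q.1 ^ 2} :=
    (measurableSet_Icc.preimage measurable_fst).inter
      ((measurableSet_Icc.preimage measurable_snd).inter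
        (measurableSet_le (by fun_prop : Measurable fun q : ℝ × ℝ => q.2 ^ 2)
          (by fun_prop : Measurable fun q : ℝ × ℝ => t - q.1 ^ 2)))
  rw [Measure.volume_eq_prod]
  exact volume_prod_setOf_mem_Icc (by norm_num : (-1 : ℝ) ≤ 1)
    (A := fun y => {z | z ∈ Icc (-1) 1 ∧ z ^ 2 ≤ t - y ^ 2}) hm
    ((by fun_prop : Continuous fun y : ℝ => 2 * min 1 √(t - y ^ 2)).integrableOn_Icc)
    (fun y _ => by positivity) fun y _ => volume_setOf_mem_Icc_and_sq_le _

theorem volume_setOf_euclideanSpace_fin_three (P : ℝ → ℝ → ℝ → Prop) :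
    volume {x : EuclideanSpace ℝ (Fin 3) | P (x 0) (x 1) (x 2)} =
      volume {p : ℝ × ℝ × ℝ | P p.1 p.2.1 p.2.2} := by
  let e : EuclideanSpace ℝ (Fin 3) ≃ᵐ ℝ × ℝ × ℝ :=
    (MeasurableEquiv.toLp 2 _).symm.trans ((MeasurableEquiv.piFinSuccAbove (fun _ => ℝ) 0).trans
      (MeasurableEquiv.prodCongr (MeasurableEquiv.refl ℝ) MeasurableEquiv.finTwoArrow))
  have he : MeasurePreserving e volume volume :=
    (((MeasurePreserving.id volume).prod (volume_preserving_finTwoArrow ℝ)).comp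
      (volume_preserving_piFinSuccAbove (fun _ => ℝ) 0)).comp
      (EuclideanSpace.volume_preserving_symm_measurableEquiv_toLp _)
  exact he.measure_preimage_equiv {p | P p.1 p.2.1 p.2.2}

theorem volume_closedBall_inter_cube {r : ℝ} (hr : 0 ≤ r) :
    volume (closedBall (0 : EuclideanSpace ℝ (Fin 3)) r ∩ {x | ∀ i, |x i| ≤ 1}) =
      ENNReal.ofReal (∫ x in (-1)..1, squareDiskArea (r ^ 2 - x ^ 2)) := by
  have hS : closedBall (0 : EuclideanSpace ℝ (Fin 3)) r ∩ {x | ∀ i, |x i| ≤ 1} =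
      {x | x 0 ∈ Icc (-1) 1 ∧ x 1 ∈ Icc (-1) 1 ∧ x 2 ∈ Icc (-1) 1 ∧
        x 2 ^ 2 ≤ r ^ 2 - x 0 ^ 2 - x 1 ^ 2} := by
    ext x
    simp only [mem_inter_iff, mem_closedBall, dist_zero_right, mem_ofPred_eq, Fin.forall_fin_succ,
      IsEmpty.forall_iff, and_true, Fin.succ_zero_eq_one, Fin.succ_one_eq_two, mem_Icc, ← abs_le,
      ← sq_le_sq₀ (norm_nonneg x) hr, EuclideanSpace.norm_sq_eq, Fin.sum_univ_three,
      Real.norm_eq_abs, sq_abs]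
    constructor
    · rintro ⟨h, h0, h1, h2⟩
      exact ⟨h0, h1, h2, by linarith⟩
    · rintro ⟨h0, h1, h2, h⟩
      exact ⟨by linarith, h0, h1, h2⟩
  rw [hS, volume_setOf_euclideanSpace_fin_three fun a b c =>
    a ∈ Icc (-1) 1 ∧ b ∈ Icc (-1) 1 ∧ c ∈ Icc (-1) 1 ∧ c ^ 2 ≤ r ^ 2 - a ^ 2 - b ^ 2,
    Measure.volume_eq_prod]
  have hm : MeasurableSet {p : ℝ × ℝ × ℝ | p.1 ∈ Icc (-1) 1 ∧ p.2.1 ∈ Icc (-1) 1 ∧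
      p.2.2 ∈ Icc (-1) 1 ∧ p.2.2 ^ 2 ≤ r ^ 2 - p.1 ^ 2 - p.2.1 ^ 2} :=
    (measurableSet_Icc.preimage measurable_fst).inter
      ((measurableSet_Icc.preimage (measurable_fst.comp measurable_snd)).inter
        ((measurableSet_Icc.preimage (measurable_snd.comp measurable_snd)).inter
          (measurableSet_le (by fun_prop : Measurable fun p : ℝ × ℝ × ℝ => p.2.2 ^ 2)
            (by fun_prop : Measurable fun p : ℝ × ℝ × ℝ => r ^ 2 - p.1 ^ 2 - p.2.1 ^ 2))))
  exact volume_prod_setOf_mem_Icc (by norm_num : (-1 : ℝ) ≤ 1) (A := fun x =>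
      {q : ℝ × ℝ | q.1 ∈ Icc (-1) 1 ∧ q.2 ∈ Icc (-1) 1 ∧ q.2 ^ 2 ≤ r ^ 2 - x ^ 2 - q.1 ^ 2}) hm
    ((continuous_squareDiskArea.comp
      (by fun_prop : Continuous fun x : ℝ => r ^ 2 - x ^ 2)).integrableOn_Icc)
    (fun x _ => squareDiskArea_nonneg _) fun x _ => volume_squareDisk _

theorem integral_neg_self_eq_two_mul_of_even {f : ℝ → ℝ} (hf : Continuous f)
    (heven : ∀ x, f (-x) = f x) (c : ℝ) :
    ∫ x in -c..c, f x = 2 * ∫ x in 0..c, f x := by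
  have hneg : ∫ x in -c..0, f x = ∫ x in 0..c, f x :=
    calc ∫ x in -c..0, f x = ∫ x in -c..-0, f x := by rw [neg_zero]
      _ = ∫ x in 0..c, f (-x) := (integral_comp_neg f).symm
      _ = ∫ x in 0..c, f x := by simp_rw [heven]
  rw [← integral_add_adjacent_intervals (b := 0) (hf.intervalIntegrable _ _)
    (hf.intervalIntegrable _ _), hneg, two_mul]

theorem arctan_sub_arctan {x y : ℝ} (h : -1 < x * y) :
    arctan x - arctan y = arctan ((x - y) / (1 + x * y)) := by
  rw [sub_eq_add_neg, ← arctan_neg, arctan_add (by linarith)]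
  congr 1
  ring

theorem hasDerivAt_sqrt_sub_sq {c y : ℝ} (hy : y ^ 2 < c) :
    HasDerivAt (fun u => √(c - u ^ 2)) (-y / √(c - y ^ 2)) y := by
  refine (((hasDerivAt_pow 2 y).const_sub c).sqrt (by linarith)).congr_deriv ?_
  norm_num
  ring

theorem hasDerivAt_arctan_div_mul_sqrt_sub_sq {c k y : ℝ} (hk : k ≠ 0) (hy : y ^ 2 < c) :
    HasDerivAt (fun u => arctan (u / (k * √(c - u ^ 2))))
      (k * c / (√(c - y ^ 2) * (k ^ 2 * (c - y ^ 2) + y ^ 2))) y := by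
  have hw : 0 < √(c - y ^ 2) := Real.sqrt_pos.2 (by linarith)
  have hw2 : √(c - y ^ 2) ^ 2 = c - y ^ 2 := Real.sq_sqrt (by linarith)
  refine (((hasDerivAt_id' y).div ((hasDerivAt_sqrt_sub_sq hy).const_mul k)
    (mul_ne_zero hk hw.ne')).arctan).congr_deriv ?_
  have : k ^ 2 * (c - y ^ 2) + y ^ 2 ≠ 0 := by positivity
  simp only [Pi.div_apply]
  field_simp
  rw [hw2]
  ring

theorem hasDerivAt_mul_sqrt_add_arctan {t y : ℝ} (hy : y ^ 2 < t) :
    HasDerivAt (fun u => u * √(t - u ^ 2) + t * arctan (u / √(t - u ^ 2)))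
      (2 * √(t - y ^ 2)) y := by
  have hw : 0 < √(t - y ^ 2) := Real.sqrt_pos.2 (by linarith)
  have hw2 : √(t - y ^ 2) ^ 2 = t - y ^ 2 := Real.sq_sqrt (by linarith)
  have h := (hasDerivAt_arctan_div_mul_sqrt_sub_sq one_ne_zero hy).const_mul t
  simp only [one_mul, one_pow, sub_add_cancel] at h
  refine (((hasDerivAt_id' y).mul (hasDerivAt_sqrt_sub_sq hy)).add h).congr_deriv ?_
  have ht : t ≠ 0 := ((sq_nonneg y).trans_lt hy).ne'
  field_simp
  rw [hw2]
  ring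

theorem hasDerivAt_squareDiskArea_primitive {r x : ℝ} (hr : r ≠ 0) (hx : x ^ 2 < r ^ 2 - 1) :
    HasDerivAt (fun u => 8 / 3 * (u * √(r ^ 2 - 1 - u ^ 2)
          + (r ^ 2 - 1) * arctan (u / √(r ^ 2 - 1 - u ^ 2)))
        + 4 / 3 * (r ^ 2 + 1) * arctan (u / √(r ^ 2 - 1 - u ^ 2))
        + (r ^ 2 * u - u ^ 3 / 3) * (π - 4 * arctan √(r ^ 2 - 1 - u ^ 2))
        - 8 / 3 * r ^ 3 * arctan (u / (r * √(r ^ 2 - 1 - u ^ 2))))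
      (4 * √(r ^ 2 - 1 - x ^ 2) + (r ^ 2 - x ^ 2) * (π - 4 * arctan √(r ^ 2 - 1 - x ^ 2))) x := by
  have hw : 0 < √(r ^ 2 - 1 - x ^ 2) := Real.sqrt_pos.2 (by linarith)
  have hw2 : √(r ^ 2 - 1 - x ^ 2) ^ 2 = r ^ 2 - 1 - x ^ 2 := Real.sq_sqrt (by linarith)
  have hc : r ^ 2 - 1 ≠ 0 := by nlinarith
  have hrx : r ^ 2 - x ^ 2 ≠ 0 := by nlinarith
  have hA := hasDerivAt_arctan_div_mul_sqrt_sub_sq one_ne_zero hx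
  simp only [one_mul, one_pow, sub_add_cancel, div_mul_cancel_right₀ hc] at hA
  have hB := hasDerivAt_arctan_div_mul_sqrt_sub_sq hr hx
  rw [show r * (r ^ 2 - 1) / (√(r ^ 2 - 1 - x ^ 2) * (r ^ 2 * (r ^ 2 - 1 - x ^ 2) + x ^ 2))
      = r / (√(r ^ 2 - 1 - x ^ 2) * (r ^ 2 - x ^ 2)) by
    rw [show r ^ 2 * (r ^ 2 - 1 - x ^ 2) + x ^ 2 = (r ^ 2 - 1) * (r ^ 2 - x ^ 2) by ring]
    field_simp] at hB
  have hP : HasDerivAt (fun u => r ^ 2 * u - u ^ 3 / 3) (r ^ 2 - x ^ 2) x := by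
    refine (((hasDerivAt_id' x).const_mul _).sub ((hasDerivAt_pow 3 x).div_const 3)).congr_deriv ?_
    ring
  have hφ := ((hasDerivAt_sqrt_sub_sq hx).arctan.const_mul 4).const_sub π
  rw [show -(4 * (1 / (1 + √(r ^ 2 - 1 - x ^ 2) ^ 2) * (-x / √(r ^ 2 - 1 - x ^ 2))))
      = 4 * x / (√(r ^ 2 - 1 - x ^ 2) * (r ^ 2 - x ^ 2)) by
    rw [hw2, show 1 + (r ^ 2 - 1 - x ^ 2) = r ^ 2 - x ^ 2 by ring]
    field_simp] at hφ
  refine (((((hasDerivAt_mul_sqrt_add_arctan hx).const_mul (8 / 3)).add (hA.const_mul _)).add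
    (hP.mul hφ)).sub (hB.const_mul _)).congr_deriv ?_
  field_simp
  linear_combination (4 * (r ^ 2 - x ^ 2)) * hw2

theorem squareDiskArea_of_two_le {t : ℝ} (ht : 2 ≤ t) : squareDiskArea t = 4 := by
  have h : EqOn (fun y => 2 * min 1 √(t - y ^ 2)) (fun _ => 2) (uIcc (-1) 1) := by
    intro y hy
    rw [uIcc_of_le (by norm_num)] at hy
    have : y ^ 2 ≤ 1 := by nlinarith [hy.1, hy.2]
    simp [Real.one_le_sqrt.2 (by linarith : 1 ≤ t - y ^ 2)]
  rw [squareDiskArea, integral_congr h]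
  norm_num

theorem squareDiskArea_of_le_two {t : ℝ} (ht1 : 1 < t) (ht2 : t ≤ 2) :
    squareDiskArea t = 4 * √(t - 1) + t * (π - 4 * arctan √(t - 1)) := by
  set a := √(t - 1)
  have ha0 : 0 < a := Real.sqrt_pos.2 (by linarith)
  have ha2 : a ^ 2 = t - 1 := Real.sq_sqrt (by linarith)
  have ha1 : a ≤ 1 := by nlinarith
  have hcont : Continuous fun y => 2 * min 1 √(t - y ^ 2) := by fun_prop
  have hflat : ∫ y in 0..a, 2 * min 1 √(t - y ^ 2) = 2 * a := by
    have h : EqOn (fun y => 2 * min 1 √(t - y ^ 2)) (fun _ => 2) (uIcc 0 a) := by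
      intro y hy
      rw [uIcc_of_le ha0.le] at hy
      simp [Real.one_le_sqrt.2 (by nlinarith [hy.1, hy.2] : 1 ≤ t - y ^ 2)]
    rw [integral_congr h]
    simp [mul_comm]
  have hcap : ∫ y in a..1, 2 * min 1 √(t - y ^ 2) = t * (π / 2 - 2 * arctan a) := by
    have h : EqOn (fun y => 2 * min 1 √(t - y ^ 2)) (fun y => 2 * √(t - y ^ 2)) (uIcc a 1) := by
      intro y hy
      rw [uIcc_of_le ha1] at hy
      simp [Real.sqrt_le_one.2 (by nlinarith [hy.1, hy.2] : t - y ^ 2 ≤ 1)]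
    rw [integral_congr h,
      integral_eq_sub_of_hasDerivAt (fun y hy => hasDerivAt_mul_sqrt_add_arctan ?_)
      ((by fun_prop : Continuous fun y => 2 * √(t - y ^ 2)).intervalIntegrable _ _)]
    · rw [show t - 1 ^ 2 = t - 1 by ring, show t - a ^ 2 = 1 by linarith, Real.sqrt_one, one_div,
        div_one, arctan_inv_of_pos ha0]
      ring
    · rw [uIcc_of_le ha1] at hy
      nlinarith [hy.1, hy.2]
  rw [squareDiskArea, integral_neg_self_eq_two_mul_of_even hcont (by simp),
    ← integral_add_adjacent_intervals (hcont.intervalIntegrable 0 a) (hcont.intervalIntegrable a 1),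
    hflat, hcap]
  ring

theorem integral_squareDiskArea {r : ℝ} (hr2 : 2 < r ^ 2) (hr3 : r ^ 2 ≤ 3) :
    ∫ x in (-1)..1, squareDiskArea (r ^ 2 - x ^ 2) = 8 * √(r ^ 2 - 2)
      + (12 * r ^ 2 - 4) * (π / 2 - 2 * arctan √(r ^ 2 - 2))
      - 16 / 3 * r ^ 3 * (arctan (1 / (r * √(r ^ 2 - 2))) - arctan (√(r ^ 2 - 2) / r)) := by
  set b := √(r ^ 2 - 2) with hb
  have hb0 : 0 < b := Real.sqrt_pos.2 (by linarith)
  have hb2 : b ^ 2 = r ^ 2 - 2 := Real.sq_sqrt (by linarith)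
  have hb1 : b ≤ 1 := by nlinarith
  have hr : r ≠ 0 := by rintro rfl; norm_num at hr2
  have hcont : Continuous fun x => squareDiskArea (r ^ 2 - x ^ 2) :=
    continuous_squareDiskArea.comp (by fun_prop)
  have hflat : ∫ x in 0..b, squareDiskArea (r ^ 2 - x ^ 2) = 4 * b := by
    have h : EqOn (fun x => squareDiskArea (r ^ 2 - x ^ 2)) (fun _ => 4) (uIcc 0 b) := by
      intro x hx
      rw [uIcc_of_le hb0.le] at hx
      exact squareDiskArea_of_two_le (by nlinarith [hx.1, hx.2])
    rw [integral_congr h]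
    simp [mul_comm]
  have hcap : ∫ x in b..1, squareDiskArea (r ^ 2 - x ^ 2) = (6 * r ^ 2 - 2) * (π / 2 - 2 * arctan b)
      - 8 / 3 * r ^ 3 * (arctan (1 / (r * b)) - arctan (b / r)) := by
    have h : EqOn (fun x => squareDiskArea (r ^ 2 - x ^ 2))
        (fun x => 4 * √(r ^ 2 - 1 - x ^ 2)
          + (r ^ 2 - x ^ 2) * (π - 4 * arctan √(r ^ 2 - 1 - x ^ 2))) (uIcc b 1) := by
      intro x hx
      rw [uIcc_of_le hb1] at hx
      dsimp only
      rw [squareDiskArea_of_le_two (by nlinarith [hx.1, hx.2]) (by nlinarith [hx.1, hx.2]),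
        sub_right_comm]
    rw [integral_congr h, integral_eq_sub_of_hasDerivAt
      (fun x hx => hasDerivAt_squareDiskArea_primitive hr ?_) ((by fun_prop :
        Continuous fun x => 4 * √(r ^ 2 - 1 - x ^ 2)
          + (r ^ 2 - x ^ 2) * (π - 4 * arctan √(r ^ 2 - 1 - x ^ 2))).intervalIntegrable _ _)]
    · rw [show r ^ 2 - 1 - 1 ^ 2 = r ^ 2 - 2 by ring, ← hb, show r ^ 2 - 1 - b ^ 2 = 1 by linarith,
        Real.sqrt_one, arctan_one, one_div b, arctan_inv_of_pos hb0]
      simp only [div_one, mul_one]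
      ring
    · rw [uIcc_of_le hb1] at hx
      nlinarith [hx.1, hx.2]
  rw [integral_neg_self_eq_two_mul_of_even hcont (by simp),
    ← integral_add_adjacent_intervals (hcont.intervalIntegrable 0 b) (hcont.intervalIntegrable b 1),
    hflat, hcap]
  ring

theorem integral_squareDiskArea_half_sq {D : ℝ} (hD1 : 2 * √2 < D) (hD2 : D ≤ 2 * √3) :
    ∫ x in (-1)..1, squareDiskArea ((D / 2) ^ 2 - x ^ 2) =
      4 * √(D ^ 2 - 8)
        + (3 * D ^ 2 - 4) * arctan ((12 - D ^ 2) / (4 * √(D ^ 2 - 8)))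
        - 2 / 3 * D ^ 3 * arctan (D * (12 - D ^ 2) / ((D ^ 2 + 4) * √(D ^ 2 - 8))) := by
  have hD0 : 0 < D / 2 := by linarith [Real.sqrt_nonneg 2]
  have hr2 : 2 < (D / 2) ^ 2 := (Real.sqrt_lt' hD0).1 (by linarith)
  have hr3 : (D / 2) ^ 2 ≤ 3 := (Real.le_sqrt hD0.le (by norm_num)).1 (by linarith)
  rw [integral_squareDiskArea hr2 hr3]
  set b := √((D / 2) ^ 2 - 2) with hb
  have hb0 : 0 < b := Real.sqrt_pos.2 (by linarith)
  have hb2 : b ^ 2 = (D / 2) ^ 2 - 2 := Real.sq_sqrt (by linarith)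
  have hD8 : √(D ^ 2 - 8) = 2 * b := by
    rw [show D ^ 2 - 8 = 2 ^ 2 * ((D / 2) ^ 2 - 2) by ring, Real.sqrt_mul (by norm_num),
      Real.sqrt_sq (by norm_num)]
  have hQ : arctan ((12 - D ^ 2) / (4 * √(D ^ 2 - 8))) = π / 2 - 2 * arctan b := by
    have h := arctan_sub_arctan (x := b⁻¹) (y := b) (by rw [inv_mul_cancel₀ hb0.ne']; norm_num)
    rw [arctan_inv_of_pos hb0, inv_mul_cancel₀ hb0.ne'] at h
    rw [hD8, show (12 - D ^ 2) / (4 * (2 * b)) = (b⁻¹ - b) / (1 + 1) by field_simp; rw [hb2]; ring]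
    linarith
  have hR : arctan (1 / (D / 2 * b)) - arctan (b / (D / 2)) =
      arctan (D * (12 - D ^ 2) / ((D ^ 2 + 4) * √(D ^ 2 - 8))) := by
    have hxy : 0 < 1 / (D / 2 * b) * (b / (D / 2)) := by positivity
    rw [arctan_sub_arctan (by linarith), hD8]
    congr 1
    have hD : D ≠ 0 := by linarith
    field_simp
    rw [hb2]
    ring
  rw [hQ, ← hR, hD8]
  ring

/-- Explicit isodiametric inequality for the integer lattice `ℤ³` in the range
`2√2 < D ≤ 2√3`: every centrally symmetric convex body with no nonzero integer point
in its interior and diameter `D` satisfies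
`vol K ≤ 4√(D²-8) + (3D²-4)·arctan((12-D²)/(4√(D²-8)))
        - (2/3)·D³·arctan(D(12-D²)/((D²+4)√(D²-8)))`. -/
theorem isodiametric_Z3_upper_range
    (K : Set (EuclideanSpace ℝ (Fin 3)))
    (hKcpt : IsCompact K) (hKconv : Convex ℝ K) (hKsymm : K = -K)
    (hKadm : ∀ z : Fin 3 → ℤ,
      (fun i => (z i : ℝ)) ≠ (0 : EuclideanSpace ℝ (Fin 3)) →
      WithLp.toLp 2 (fun i => (z i : ℝ)) ∉ interior K)
    (D : ℝ) (hD : D = diam K)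
    (hD1 : 2 * Real.sqrt 2 < D) (hD2 : D ≤ 2 * Real.sqrt 3) :
    volume K ≤ ENNReal.ofReal
      (4 * Real.sqrt (D ^ 2 - 8)
        + (3 * D ^ 2 - 4) * Real.arctan ((12 - D ^ 2) / (4 * Real.sqrt (D ^ 2 - 8)))
        - (2 / 3) * D ^ 3
            * Real.arctan (D * (12 - D ^ 2) / ((D ^ 2 + 4) * Real.sqrt (D ^ 2 - 8)))) := by
  have hneg : ∀ x ∈ K, -x ∈ K := fun x hx => by rw [hKsymm]; exact neg_mem_neg.2 hx
  have hfree : ∀ z : Fin 3 → ℤ, z ≠ 0 → intPoint z ∉ interior K := fun z hz =>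
    hKadm z fun h => hz (funext fun i => by simpa using congrFun h i)
  have hD0 : 0 ≤ D / 2 := by linarith [Real.sqrt_nonneg 2]
  calc volume K
      ≤ volume (closedBall 0 (D / 2) ∩ {x : EuclideanSpace ℝ (Fin 3) | ∀ i, |x i| ≤ 1}) := by
        rw [hD]; exact volume_le_volume_closedBall_inter_cube hKcpt.isBounded hKconv hneg hfree
    _ = _ := by rw [volume_closedBall_inter_cube hD0, integral_squareDiskArea_half_sq hD1 hD2]
end
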